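/- Suppose T is a deductively closed consistent propositional theory and * satisfies the AGM postulates of closure, success, inclusion, and vacuity. Then the set of belief-revision explanations of β relative to T strictly contains the set of abductive explanations: every single-formula abductive explanation α of β (T ∪ {α} consistent and T ∪ {α} ⊨ β) is a belief-revision explanation (β ∈ T * α, T * α consistent); and if moreover T ⊨ ¬β with β satisfiable, there is a belief-revision explanation (namely β, by success and consistency) but no abductive explanation. -/

import Mathlib

inductive PropForm where
  | atom : Nat → PropForm
  | falsum : PropForm
  | neg : PropForm → PropForm
  | conj : PropForm → PropForm → PropForm
  | impl : PropForm → PropForm → PropForm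

def PropForm.eval (v : Nat → Bool) : PropForm → Bool
  | .atom n => v n
  | .falsum => false
  | .neg φ => !(φ.eval v)
  | .conj φ ψ => φ.eval v && ψ.eval v
  | .impl φ ψ => !(φ.eval v) || ψ.eval v

def Entails (T : Set PropForm) (φ : PropForm) : Prop :=
  ∀ v : Nat → Bool, (∀ ψ ∈ T, ψ.eval v = true) → φ.eval v = true

def Cn (T : Set PropForm) : Set PropForm := {φ | Entails T φ}

def Consistent (T : Set PropForm) : Prop := ¬ Entails T .falsum

/-!
Abduction demands a consistent extension `T ∪ {α}` entailing `β`; by vacuity the revision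
`T * α` then contains that extension, and by inclusion it is contained in its consequences, so it
inherits both `β` and consistency. Conversely, if `T ⊨ ¬β` then every extension of `T` entails
`¬β`, so none can consistently entail `β`, while `β` itself still explains `β` by revision.
-/

def IsAbductiveExplanation (T : Set PropForm) (β α : PropForm) : Prop :=
  Consistent (T ∪ {α}) ∧ Entails (T ∪ {α}) β

def IsRevisionExplanation (rev : Set PropForm → PropForm → Set PropForm) (T : Set PropForm)
    (β α : PropForm) : Prop :=
  β ∈ rev T α ∧ Consistent (rev T α)

namespace Entails

variable {S U : Set PropForm} {φ : PropForm}

theorem mono (hSU : S ⊆ U) (h : Entails S φ) : Entails U φ :=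
  fun v hv => h v fun _ hψ => hv _ (hSU hψ)

theorem of_subset_Cn (hSU : S ⊆ Cn U) (h : Entails S φ) : Entails U φ :=
  fun v hv => h v fun _ hψ => hSU hψ v hv

end Entails

namespace Consistent

variable {S U : Set PropForm} {φ : PropForm}

theorem of_subset_Cn (hU : Consistent U) (hSU : S ⊆ Cn U) : Consistent S :=
  fun h => hU (h.of_subset_Cn hSU)

theorem not_entails_neg_of_entails (hS : Consistent S) (h : Entails S φ) :
    ¬ Entails S (.neg φ) := fun hneg =>
  hS fun v hv => by simpa [PropForm.eval, h v hv] using hneg v hv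

end Consistent

theorem IsAbductiveExplanation.isRevisionExplanation
    {rev : Set PropForm → PropForm → Set PropForm} {T : Set PropForm} {α β : PropForm}
    (inclusion : rev T α ⊆ Cn (T ∪ {α}))
    (vacuity : Consistent (T ∪ {α}) → Cn (T ∪ {α}) ⊆ rev T α)
    (h : IsAbductiveExplanation T β α) : IsRevisionExplanation rev T β α :=
  ⟨vacuity h.1 h.2, h.1.of_subset_Cn inclusion⟩

theorem not_isAbductiveExplanation_of_entails_neg {T : Set PropForm} {β : PropForm}
    (h : Entails T (.neg β)) (α : PropForm) : ¬ IsAbductiveExplanation T β α :=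
  fun ⟨hcons, hβ⟩ => hcons.not_entails_neg_of_entails hβ (h.mono Set.subset_union_left)

theorem stmt16_general (T : Set PropForm)
    (rev : Set PropForm → PropForm → Set PropForm)
    (success : ∀ α : PropForm, α ∈ rev T α)
    (inclusion : ∀ α : PropForm, rev T α ⊆ Cn (T ∪ {α}))
    (vacuity : ∀ α : PropForm, Consistent (T ∪ {α}) → Cn (T ∪ {α}) ⊆ rev T α)
    (consistencyPost : ∀ α : PropForm, (∃ v : Nat → Bool, α.eval v = true) →
      Consistent (rev T α))
    (β : PropForm) :
    (∀ α : PropForm, Consistent (T ∪ {α}) → Entails (T ∪ {α}) β →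
      β ∈ rev T α ∧ Consistent (rev T α)) ∧
    (Entails T (.neg β) → (∃ v : Nat → Bool, β.eval v = true) →
      ((β ∈ rev T β ∧ Consistent (rev T β)) ∧
        ¬ ∃ α : PropForm, Consistent (T ∪ {α}) ∧ Entails (T ∪ {α}) β)) :=
  ⟨fun α hcons hβ =>
      IsAbductiveExplanation.isRevisionExplanation (inclusion α) (vacuity α) ⟨hcons, hβ⟩,
    fun hneg hsat =>
      ⟨⟨success β, consistencyPost β hsat⟩,
        fun ⟨α, hα⟩ => not_isAbductiveExplanation_of_entails_neg hneg α hα⟩⟩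

theorem stmt16 (T : Set PropForm) (hclosed : Cn T = T) (hcons : Consistent T)
    (rev : Set PropForm → PropForm → Set PropForm)
    (closure : ∀ α : PropForm, rev T α = Cn (rev T α))
    (success : ∀ α : PropForm, α ∈ rev T α)
    (inclusion : ∀ α : PropForm, rev T α ⊆ Cn (T ∪ {α}))
    (vacuity : ∀ α : PropForm, Consistent (T ∪ {α}) → Cn (T ∪ {α}) ⊆ rev T α)
    (consistencyPost : ∀ α : PropForm, (∃ v : Nat → Bool, α.eval v = true) →
      Consistent (rev T α))
    (β : PropForm) :
    (∀ α : PropForm, Consistent (T ∪ {α}) → Entails (T ∪ {α}) β →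
      β ∈ rev T α ∧ Consistent (rev T α)) ∧
    (Entails T (.neg β) → (∃ v : Nat → Bool, β.eval v = true) →
      ((β ∈ rev T β ∧ Consistent (rev T β)) ∧
        ¬ ∃ α : PropForm, Consistent (T ∪ {α}) ∧ Entails (T ∪ {α}) β)) :=
  stmt16_general T rev success inclusion vacuity consistencyPost β
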